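/- arXiv:1710.04079 — 2 statements merged into one kernel-verified Lean document; each statement's English description precedes it below -/
import Mathlib

section
/- Let A be a nonnegative tensor of order m and dimension n with block upper-triangular structure with respect to classes α₁,…,α_s (i.e., A[α_{i₁}|α_{i₂}|⋯|α_{i_m}] ≠ 0 only when i₁ ≤ i_j for all j = 2,…,m). Then ρ(A[α_i]) ≤ ρ(A) for every i, and if x is an eigenvector of A corresponding to ρ(A), there exists at least one index i with ρ(A[α_i]) = ρ(A) and x[α_i] ≠ 0. -/
/-!
An eigenvalue of a diagonal block `A[αₖ]` is an eigenvalue of `A`: place the block eigenvector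
on `αₖ`, zero on the classes above it, multiplied by a scaling unknown, with free unknowns on the
classes below. The rows of the lower classes form a homogeneous system with one equation fewer
than unknowns, which has a nontrivial solution over `ℂ` by Krull's height theorem. Conversely, an
eigenvector of `A` restricted to the highest class of its support is an eigenvector of that
diagonal block with the same eigenvalue.
-/

open scoped BigOperators

namespace PaperTensor

/-- A tensor of order `m` and dimension `|ι|`: entry `A i f` is `a_{i, f 0, …, f (m-2)}`. -/
abbrev Tensor (ι : Type) (m : ℕ) : Type := ι → (Fin (m - 1) → ι) → ℂ

variable {ι : Type} [Fintype ι] {m : ℕ}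

/-- `(A x^{m-1})_i = ∑ a_{i i₂ … i_m} x_{i₂} ⋯ x_{i_m}`. -/
noncomputable def tApp (A : Tensor ι m) (x : ι → ℂ) (i : ι) : ℂ :=
  ∑ f : Fin (m - 1) → ι, A i f * ∏ j, x (f j)

/-- `x ≠ 0` and `A x^{m-1} = l x^{[m-1]}`. -/
def IsEigPair (A : Tensor ι m) (l : ℂ) (x : ι → ℂ) : Prop :=
  x ≠ 0 ∧ ∀ i, tApp A x i = l * x i ^ (m - 1)

def Eigenvalues (A : Tensor ι m) : Set ℂ := {l | ∃ x, IsEigPair A l x}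

/-- The spectral radius: the largest modulus of an eigenvalue. -/
noncomputable def specRad (A : Tensor ι m) : ℝ := sSup ((fun z : ℂ => ‖z‖) '' Eigenvalues A)

/-- All entries are nonnegative reals. -/
def Nonneg (A : Tensor ι m) : Prop := ∀ i f, ∃ r : ℝ, 0 ≤ r ∧ A i f = (r : ℂ)

/-- Arc `(i,j)` of the directed graph `G(A)`. -/
def Arc (A : Tensor ι m) (i j : ι) : Prop := ∃ f, A i f ≠ 0 ∧ ∃ k, f k = j

/-- `G(A)` is strongly connected. -/
def WeaklyIrreducible (A : Tensor ι m) : Prop :=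
  ∀ i j : ι, Relation.ReflTransGen (Arc A) i j

/-- The projective eigenvariety `PV_l(A) ⊆ ℙ^{n-1}`. -/
def PV (A : Tensor ι m) (l : ℂ) : Set (Projectivization ℂ (ι → ℂ)) :=
  {p | ∃ (v : ι → ℂ) (hv : v ≠ 0), Projectivization.mk ℂ v hv = p ∧
        ∀ i, tApp A v i = l * v i ^ (m - 1)}

/-- `(D^{-(m-1)} A D)_{i₁…i_m} = d_{i₁}^{-(m-1)} a_{i₁…i_m} d_{i₂} ⋯ d_{i_m}`. -/
noncomputable def diagConj (d : ι → ℂ) (A : Tensor ι m) : Tensor ι m :=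
  fun i f => (d i)⁻¹ ^ (m - 1) * A i f * ∏ j, d (f j)

/-- Combinatorial symmetry: the support is invariant under permutations of indices. -/
def CombSymm (A : Tensor ι m) : Prop :=
  ∀ i f i' f', (i ::ₘ Multiset.map f Finset.univ.val) = (i' ::ₘ Multiset.map f' Finset.univ.val) →
    (A i f ≠ 0 ↔ A i' f' ≠ 0)

/-- Irreducibility of a tensor. -/
def Irred (A : Tensor ι m) : Prop :=
  ¬ ∃ S : Set ι, S.Nonempty ∧ S ≠ Set.univ ∧
      ∀ i ∈ S, ∀ f : Fin (m - 1) → ι, (∀ j, f j ∉ S) → A i f = 0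

/-- Solid arc: `(i,j)` arising from a nonzero entry `a_{ij…j}`. -/
def SolidArc (A : Tensor ι m) (i j : ι) : Prop := A i (fun _ => j) ≠ 0

/-- Spectral `ℓ`-symmetry: `Spec(A) = e^{2πi/ℓ} Spec(A)`. -/
def SpectralSymm (A : Tensor ι m) (ℓ : ℕ) : Prop :=
  Eigenvalues A = (fun z => Complex.exp ((2 * Real.pi / ℓ : ℝ) * Complex.I) * z) '' Eigenvalues A

/-- The set `𝔇^{(j)}(A)` (for the given `ℓ`), as diagonal matrices recorded by their diagonals. -/
def Dgj {n m : ℕ} [NeZero n] (A : Tensor (Fin n) m) (ℓ j : ℕ) : Set (Fin n → ℂ) :=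
  {d | (∀ i, d i ≠ 0) ∧ d 0 = 1 ∧
    ∀ i f, A i f = Complex.exp (-(2 * Real.pi * j / ℓ : ℝ) * Complex.I) * diagConj d A i f}

/-- The group `𝔇(A) = ⋃_{j=0}^{ℓ-1} 𝔇^{(j)}(A)`. -/
def DgAll {n m : ℕ} [NeZero n] (A : Tensor (Fin n) m) (ℓ : ℕ) : Set (Fin n → ℂ) :=
  {d | ∃ j < ℓ, d ∈ Dgj A ℓ j}

/-- `𝔇^{(0)}(A)`. -/
def Dg0 {n m : ℕ} [NeZero n] (A : Tensor (Fin n) m) : Set (Fin n → ℂ) :=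
  {d | (∀ i, d i ≠ 0) ∧ d 0 = 1 ∧ ∀ i f, A i f = diagConj d A i f}

/-- Restriction (principal subtensor) of `A` to a set `S` of indices. -/
def restrict (A : Tensor ι m) (S : Set ι) : Tensor S m :=
  fun i f => A i.1 (fun j => (f j).1)

end PaperTensor

namespace MvPolynomial

variable {K σ : Type*} [Field K]

noncomputable def translate (t : σ → K) : MvPolynomial σ K ≃ₐ[K] MvPolynomial σ K :=
  AlgEquiv.ofAlgHom (bind₁ fun j => X j + C (t j)) (bind₁ fun j => X j - C (t j))
    (by ext j; simp) (by ext j; simp)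

theorem eval_translate (t b : σ → K) (p : MvPolynomial σ K) :
    eval b (translate t p) = eval (b + t) p := by
  change aeval b (bind₁ _ p) = _
  simp only [aeval_bind₁, map_add, aeval_X, aeval_C]
  rfl

theorem comap_translate_vanishingIdeal_singleton (a b : σ → K) :
    (vanishingIdeal K {b}).comap (translate (a - b)).toRingEquiv = vanishingIdeal K {a} := by
  ext p
  simp [eval_translate]

variable [IsAlgClosed K] [Fintype σ]

theorem card_le_height_vanishingIdeal_singleton (a : σ → K) :
    (Fintype.card σ : ℕ∞) ≤ (vanishingIdeal K {a} : Ideal (MvPolynomial σ K)).height := by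
  -- every maximal ideal is a point, hence a translate of `a`, so all have the same height
  have hle : ringKrullDim (MvPolynomial σ K) ≤ (vanishingIdeal K {a}).height := by
    refine (ringKrullDim_le_iff_isMaximal_height_le _).2 fun m hm => ?_
    obtain ⟨b, rfl⟩ := eq_vanishingIdeal_singleton_of_isMaximal K hm
    rw [← comap_translate_vanishingIdeal_singleton a b, RingEquiv.height_comap]
  rw [MvPolynomial.ringKrullDim_of_isNoetherianRing, ringKrullDim_eq_zero_of_field, zero_add,
    Nat.card_eq_fintype_card] at hle
  exact_mod_cast hle

theorem exists_ne_forall_eval_eq_zero_of_card_lt {κ : Type*} [Fintype κ]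
    (f : κ → MvPolynomial σ K) (a : σ → K) (ha : ∀ i, eval a (f i) = 0)
    (hcard : Fintype.card κ < Fintype.card σ) :
    ∃ v ≠ a, ∀ i, eval v (f i) = 0 := by
  by_contra! h
  set J := Ideal.span (Set.range f)
  have hlocus : zeroLocus K J ⊆ {a} := by
    intro x hx
    by_contra hxa
    obtain ⟨i, hi⟩ := h x hxa
    exact hi (mem_zeroLocus_iff.1 hx _ (Ideal.subset_span ⟨i, rfl⟩))
  have hJa : J ≤ vanishingIdeal K {a} := by
    rw [Ideal.span_le]
    rintro _ ⟨i, rfl⟩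
    simpa [mem_vanishingIdeal_singleton_iff] using ha i
  have hmin : vanishingIdeal K {a} ∈ J.minimalPrimes := by
    refine ⟨⟨(isMaximal_iff_eq_vanishingIdeal_singleton.2 ⟨a, rfl⟩).isPrime, hJa⟩,
      fun q ⟨hq, hJq⟩ _ => ?_⟩
    rw [← IsPrime.vanishingIdeal_zeroLocus (K := K) q]
    exact vanishingIdeal_anti_mono ((zeroLocus_anti_mono hJq).trans hlocus)
  have hrange : (Set.range f).ncard ≤ Fintype.card κ := by
    rw [← Set.image_univ, ← Nat.card_eq_fintype_card, ← Set.ncard_univ]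
    exact Set.ncard_image_le
  have := (card_le_height_vanishingIdeal_singleton (K := K) a).trans
    (Ideal.height_le_card_of_mem_minimalPrimes_span (Set.finite_range f) hmin)
  norm_cast at this
  omega

end MvPolynomial

namespace PaperTensor

variable {ι : Type} [Fintype ι] {m : ℕ}

theorem tApp_congr {A : Tensor ι m} {x y : ι → ℂ} {i : ι}
    (h : ∀ f, A i f ≠ 0 → ∀ j, x (f j) = y (f j)) : tApp A x i = tApp A y i := by
  refine Finset.sum_congr rfl fun f _ => ?_
  by_cases hf : A i f = 0
  · simp [hf]
  · simp only [h f hf]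

theorem tApp_smul (A : Tensor ι m) (t : ℂ) (x : ι → ℂ) (i : ι) :
    tApp A (t • x) i = t ^ (m - 1) * tApp A x i := by
  simp only [tApp, Finset.mul_sum, Pi.smul_apply, smul_eq_mul, Finset.prod_mul_distrib,
    Finset.prod_const, Finset.card_univ, Fintype.card_fin]
  exact Finset.sum_congr rfl fun f _ => by ring

theorem tApp_zero (hm : 2 ≤ m) (A : Tensor ι m) (i : ι) : tApp A 0 i = 0 := by
  simpa [zero_pow (show m - 1 ≠ 0 by omega)] using tApp_smul A 0 0 i

theorem tApp_restrict {A : Tensor ι m} {S : Set ι} [Fintype S] {x : ι → ℂ} {i : ι} (hi : i ∈ S)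
    (hx : ∀ f, A i f ≠ 0 → ∀ j, f j ∉ S → x (f j) = 0) :
    tApp (restrict A S) (fun w => x w) ⟨i, hi⟩ = tApp A x i := by
  refine Fintype.sum_of_injective (fun g j => (g j : ι))
    (fun g g' h => funext fun j => Subtype.ext (congrFun h j)) _ _ (fun f hf => ?_) fun _ => rfl
  obtain ⟨j, hj⟩ : ∃ j, f j ∉ S := by
    by_contra! h
    exact hf ⟨fun j => ⟨f j, h j⟩, rfl⟩
  by_cases hA : A i f = 0
  · simp [hA]
  · show A i f * ∏ j, x (f j) = 0
    rw [Finset.prod_eq_zero (Finset.mem_univ j) (hx f hA j hj), mul_zero]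

open MvPolynomial in
theorem mem_eigenvalues_of_invariant (hm : 2 ≤ m) {A : Tensor ι m} {U : Set ι}
    (hU : ∀ i ∈ U, ∀ f, A i f ≠ 0 → ∀ j, f j ∈ U) {l : ℂ} {x : ι → ℂ}
    (hx0 : ∃ i ∈ U, x i ≠ 0) (hx : ∀ i ∈ U, tApp A x i = l * x i ^ (m - 1)) :
    l ∈ Eigenvalues A := by
  classical
  -- on `U` the unknown is a multiple `X none` of `x`; off `U` each coordinate is a free unknown
  let y : ι → MvPolynomial (Option ↥Uᶜ) ℂ := fun w =>
    if h : w ∈ U then C (x w) * X none else X (some ⟨w, h⟩)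
  let G : ↥Uᶜ → MvPolynomial (Option ↥Uᶜ) ℂ := fun i =>
    C l * y i ^ (m - 1) - ∑ f : Fin (m - 1) → ι, C (A i f) * ∏ j, y (f j)
  have heval : ∀ v i, eval v (G i) =
      l * eval v (y i) ^ (m - 1) - tApp A (fun w => eval v (y w)) i := by
    intro v i
    simp [G, tApp, map_prod]
  have hG0 : ∀ i, eval 0 (G i) = 0 := by
    intro i
    have hy0 : ∀ w, eval 0 (y w) = 0 := fun w => by by_cases h : w ∈ U <;> simp [y, h]
    rw [heval, hy0, show (fun w => eval 0 (y w)) = 0 from funext hy0, tApp_zero hm,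
      zero_pow (by omega), mul_zero, sub_zero]
  obtain ⟨v, hv0, hv⟩ := exists_ne_forall_eval_eq_zero_of_card_lt G 0 hG0 (by simp)
  set z : ι → ℂ := fun w => eval v (y w)
  have hzU : ∀ w ∈ U, z w = (v none • x) w := by
    intro w hw
    simp [z, y, hw, mul_comm]
  have hzUc : ∀ w (hw : w ∉ U), z w = v (some ⟨w, hw⟩) := by
    intro w hw
    simp [z, y, hw]
  refine ⟨z, ?_, fun i => ?_⟩
  · obtain ⟨o, ho⟩ := Function.ne_iff.1 hv0
    rcases o with _ | ⟨w, hw⟩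
    · obtain ⟨i, hi, hxi⟩ := hx0
      exact Function.ne_iff.2 ⟨i, by simpa [hzU i hi] using ⟨ho, hxi⟩⟩
    · exact Function.ne_iff.2 ⟨w, by simpa [hzUc w hw] using ho⟩
  · by_cases hi : i ∈ U
    · rw [tApp_congr fun f hf j => hzU _ (hU i hi f hf j), tApp_smul, hx i hi, hzU i hi,
        Pi.smul_apply, smul_eq_mul]
      ring
    · exact (sub_eq_zero.1 ((heval v ⟨i, hi⟩).symm.trans (hv _))).symm

theorem norm_tApp_le (A : Tensor ι m) {x : ι → ℂ} {r : ℝ} (hx : ∀ j, ‖x j‖ ≤ r) (i : ι) :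
    ‖tApp A x i‖ ≤ (∑ f, ‖A i f‖) * r ^ (m - 1) := by
  rw [Finset.sum_mul]
  refine (norm_sum_le _ _).trans (Finset.sum_le_sum fun f _ => ?_)
  rw [norm_mul, norm_prod]
  gcongr
  calc ∏ j, ‖x (f j)‖ ≤ ∏ _j : Fin (m - 1), r :=
        Finset.prod_le_prod (fun _ _ => norm_nonneg _) fun j _ => hx (f j)
    _ = r ^ (m - 1) := by simp

theorem bddAbove_norm_eigenvalues (A : Tensor ι m) :
    BddAbove (norm '' Eigenvalues A) := by
  refine ⟨∑ i, ∑ f, ‖A i f‖, ?_⟩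
  rintro _ ⟨l, ⟨x, hx0, hx⟩, rfl⟩
  obtain ⟨j, hj⟩ := Function.ne_iff.1 hx0
  obtain ⟨i, -, hi⟩ := Finset.exists_max_image Finset.univ (fun j => ‖x j‖) ⟨j, Finset.mem_univ j⟩
  have hxi : 0 < ‖x i‖ := (norm_pos_iff.2 hj).trans_le (hi j (Finset.mem_univ j))
  have := norm_tApp_le A (fun j => hi j (Finset.mem_univ j)) i
  rw [hx i, norm_mul, norm_pow] at this
  exact (le_of_mul_le_mul_right this (pow_pos hxi _)).trans <|
    Finset.single_le_sum (f := fun i => ∑ f, ‖A i f‖)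
      (fun i _ => Finset.sum_nonneg fun f _ => norm_nonneg _) (Finset.mem_univ i)

theorem norm_le_specRad {A : Tensor ι m} {l : ℂ} (hl : l ∈ Eigenvalues A) : ‖l‖ ≤ specRad A :=
  le_csSup (bddAbove_norm_eigenvalues A) ⟨l, hl, rfl⟩

theorem specRad_nonneg (A : Tensor ι m) : 0 ≤ specRad A :=
  Real.sSup_nonneg <| by rintro _ ⟨l, -, rfl⟩; exact norm_nonneg l

theorem specRad_le_of_eigenvalues_subset {κ : Type} [Fintype κ] {A : Tensor ι m} {B : Tensor κ m}
    (h : Eigenvalues B ⊆ Eigenvalues A) : specRad B ≤ specRad A :=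
  Real.sSup_le (by rintro _ ⟨l, hl, rfl⟩; exact norm_le_specRad (h hl)) (specRad_nonneg A)

section BlockTriangular

variable {α : Type} [LinearOrder α] {A : Tensor ι m} {c : ι → α}

theorem eigenvalues_restrict_subset (hm : 2 ≤ m)
    (hblock : ∀ i f, A i f ≠ 0 → ∀ j, c i ≤ c (f j)) (k : α) :
    Eigenvalues (restrict A {i | c i = k}) ⊆ Eigenvalues A := by
  rintro l ⟨y, hy0, hy⟩
  let x : ι → ℂ := fun w => if h : c w = k then y ⟨w, h⟩ else 0
  have hxk : ∀ w (h : c w = k), x w = y ⟨w, h⟩ := fun w h => dif_pos h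
  have hx0 : ∀ w, c w ≠ k → x w = 0 := fun w h => dif_neg h
  refine mem_eigenvalues_of_invariant hm (U := {i | k ≤ c i}) (x := x)
    (fun i hi f hf j => le_trans hi (hblock i f hf j)) ?_ fun i (hi : k ≤ c i) => ?_
  · obtain ⟨w, hw⟩ := Function.ne_iff.1 hy0
    exact ⟨w, w.2.ge, by rwa [hxk w w.2]⟩
  · rcases hi.eq_or_lt with hik | hik
    · rw [← tApp_restrict (S := {i | c i = k}) hik.symm fun f _ j hj => hx0 _ hj, hxk i hik.symm,
        show (fun w : {i | c i = k} => x w) = y from funext fun w => hxk w w.2]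
      exact hy ⟨i, hik.symm⟩
    · rw [hx0 i hik.ne', zero_pow (by omega), mul_zero,
        tApp_congr (y := 0) fun f hf j => hx0 _ (hik.trans_le (hblock i f hf j)).ne',
        tApp_zero hm]

theorem exists_mem_eigenvalues_restrict (hblock : ∀ i f, A i f ≠ 0 → ∀ j, c i ≤ c (f j))
    {l : ℂ} {x : ι → ℂ} (hx : IsEigPair A l x) :
    ∃ i, x i ≠ 0 ∧ l ∈ Eigenvalues (restrict A {w | c w = c i}) := by
  classical
  obtain ⟨i, hi, hmax⟩ := Finset.exists_max_image (Finset.univ.filter (x · ≠ 0)) c <| by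
    obtain ⟨j, hj⟩ := Function.ne_iff.1 hx.1
    exact ⟨j, by simpa using hj⟩
  have hxi : x i ≠ 0 := (Finset.mem_filter.1 hi).2
  refine ⟨i, hxi, fun w => x w, Function.ne_iff.2 ⟨⟨i, rfl⟩, hxi⟩, fun w => ?_⟩
  rw [tApp_restrict w.2 fun f hf j hj => ?_, hx.2]
  by_contra hxj
  exact hj (le_antisymm (hmax _ (by simpa using hxj)) (w.2 ▸ hblock w f hf j))

end BlockTriangular

theorem stmt16_general {n m s : ℕ} (hm : 2 ≤ m) (A : Tensor (Fin n) m)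
    (c : Fin n → Fin s)
    (hblock : ∀ i f, A i f ≠ 0 → ∀ j, c i ≤ c (f j)) :
    (∀ k : Fin s, specRad (restrict A {i | c i = k}) ≤ specRad A) ∧
    (∀ x : Fin n → ℂ, IsEigPair A ((specRad A : ℝ) : ℂ) x →
      ∃ k : Fin s, specRad (restrict A {i | c i = k}) = specRad A ∧
        ∃ i : Fin n, c i = k ∧ x i ≠ 0) := by
  have hle : ∀ k, specRad (restrict A {i | c i = k}) ≤ specRad A := fun k =>
    specRad_le_of_eigenvalues_subset (eigenvalues_restrict_subset hm hblock k)
  refine ⟨hle, fun x hx => ?_⟩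
  obtain ⟨i, hxi, hρ⟩ := exists_mem_eigenvalues_restrict hblock hx
  refine ⟨c i, le_antisymm (hle _) ?_, i, rfl, hxi⟩
  simpa [abs_of_nonneg (specRad_nonneg A)] using norm_le_specRad hρ

/-- For a nonnegative tensor with block upper-triangular structure with respect to classes
`α₁,…,α_s`: each principal subtensor satisfies `ρ(A[αᵢ]) ≤ ρ(A)`, and any eigenvector `x`
for `ρ(A)` has some class `αᵢ` with `ρ(A[αᵢ]) = ρ(A)` and `x[αᵢ] ≠ 0`. -/
theorem stmt16 {n m s : ℕ} (hm : 2 ≤ m) (A : Tensor (Fin n) m) (hA : Nonneg A)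
    (c : Fin n → Fin s)
    (hblock : ∀ i f, A i f ≠ 0 → ∀ j, c i ≤ c (f j)) :
    (∀ k : Fin s, specRad (restrict A {i | c i = k}) ≤ specRad A) ∧
    (∀ x : Fin n → ℂ, IsEigPair A ((specRad A : ℝ) : ℂ) x →
      ∃ k : Fin s, specRad (restrict A {i | c i = k}) = specRad A ∧
        ∃ i : Fin n, c i = k ∧ x i ≠ 0) :=
  stmt16_general hm A c hblock

end PaperTensor
end

section
/- Let G be a connected m-uniform hypergraph with at least one edge and adjacency tensor A(G) with spectral radius ρ. Then for every eigenvalue λ of A(G) with |λ| = ρ, the projective eigenvariety PV_λ(A(G)) is finite, and all such projective eigenvarieties have the same cardinality. -/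
open scoped BigOperators

namespace PaperTensor

variable {ι : Type} [Fintype ι] {m : ℕ}

attribute [local instance] Classical.propDecidable

/-- The adjacency tensor of an `m`-uniform hypergraph with edge set `E` on `Fin n`. -/
noncomputable def adjT (n m : ℕ) (E : Finset (Finset (Fin n))) : Tensor (Fin n) m :=
  fun i f => if insert i (Finset.image f Finset.univ) ∈ E
    then (1 : ℂ) / (Nat.factorial (m - 1)) else 0

/-- Connectivity of vertices in a hypergraph. -/
def HConn {n : ℕ} (E : Finset (Finset (Fin n))) : Fin n → Fin n → Prop :=
  Relation.ReflTransGen (fun u w => ∃ e ∈ E, u ∈ e ∧ w ∈ e)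

/-!
For `A = A(G)` one has `(A x^{m-1})_i = ∑_{e ∋ i} ∏_{v ∈ e \ i} x_v`. Maximizing
`∑_e ∏_{v ∈ e} y_v` over `y ≥ 0` with `∑ y_i^m = 1` gives, by a Lagrange condition, a nonnegative
eigenvector `y` for `r = m · max`; raising its zero coordinates shows `y > 0` when `G` is
connected. Comparing any eigenvector `x` with `y` at the index maximizing `|x_i| / y_i` gives
`|λ| ≤ r`, so `ρ = r`. If `|λ| = ρ`, then `|x|` is a subeigenvector for `ρ`, and propagating the
equality case along edges gives `|x| = s y`. Equality in the triangle inequality then forces the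
phases `d = x / |x|` to satisfy `λ d_i^{m-1} = ρ ∏_{v ∈ e \ i} d_v` on every edge `e ∋ i`. Hence
`d_i^m` is constant, so `PV_λ` lies in the finite set of points `[d y]` with `d_i^m = 1`, and
`x ↦ d x` maps `ρ`-eigenvectors bijectively onto `λ`-eigenvectors, so `PV_λ` is the image of
`PV_ρ` under an injective projective map.
-/

open Finset
open scoped Nat

section HypergraphForms

variable {α R : Type*} [DecidableEq α]

def linkSum [CommSemiring R] (E : Finset (Finset α)) (x : α → R) (i : α) : R :=
  ∑ e ∈ E with i ∈ e, ∏ v ∈ e.erase i, x v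

lemma map_linkSum {S : Type*} [CommSemiring R] [CommSemiring S] (g : R →+* S)
    (E : Finset (Finset α)) (x : α → R) (i : α) :
    g (linkSum E x i) = linkSum E (fun v => g (x v)) i := by
  simp only [linkSum, map_sum, map_prod]

lemma norm_linkSum_le {𝕜 : Type*} [NormedCommRing 𝕜] [NormOneClass 𝕜] (E : Finset (Finset α))
    (x : α → 𝕜) (i : α) : ‖linkSum E x i‖ ≤ linkSum E (fun v => ‖x v‖) i :=
  (norm_sum_le _ _).trans (sum_le_sum fun _ _ => Finset.norm_prod_le _ _)

lemma linkSum_smul [CommSemiring R] {m : ℕ} {E : Finset (Finset α)} (hunif : ∀ e ∈ E, #e = m)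
    (c : R) (x : α → R) (i : α) : linkSum E (c • x) i = c ^ (m - 1) * linkSum E x i := by
  simp only [linkSum, mul_sum, Pi.smul_apply, smul_eq_mul, prod_mul_distrib, prod_const]
  refine sum_congr rfl fun e he => ?_
  rw [card_erase_of_mem (mem_filter.mp he).2, hunif e (mem_filter.mp he).1]

lemma linkSum_mono {E : Finset (Finset α)} {u v : α → ℝ} (hu : ∀ k, 0 ≤ u k)
    (huv : ∀ k, u k ≤ v k) (i : α) : linkSum E u i ≤ linkSum E v i :=
  sum_le_sum fun _ _ => prod_le_prod (fun k _ => hu k) fun k _ => huv k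

end HypergraphForms

lemma insert_eq_iff_eq_erase {α : Type*} [DecidableEq α] {e t : Finset α} {i : α}
    (hi : i ∈ e) (ht : #t ≤ #e - 1) : insert i t = e ↔ t = e.erase i := by
  refine ⟨fun h => ?_, fun h => h ▸ insert_erase hi⟩
  have hsub : e.erase i ⊆ t := fun v hv => by
    rw [← h, mem_erase] at hv
    exact (mem_insert.mp hv.2).resolve_left hv.1
  exact (eq_of_subset_of_card_le hsub (by rwa [card_erase_of_mem hi])).symm

lemma card_filter_image_eq {α : Type*} [Fintype α] [DecidableEq α] {k : ℕ} {s : Finset α}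
    (hs : #s = k) : #{f : Fin k → α | univ.image f = s} = k ! := by
  have mem_of_image {f : Fin k → α} (hf : univ.image f = s) {v : α} :
      v ∈ s ↔ ∃ j, f j = v := by
    simp [← hf]
  have e : {f : Fin k → α // univ.image f = s} ≃ (Fin k ≃ s) :=
    { toFun := fun f => Equiv.ofBijective (fun j => ⟨f.1 j, (mem_of_image f.2).2 ⟨j, rfl⟩⟩) <| by
        refine (Fintype.bijective_iff_surjective_and_card _).2 ⟨fun v => ?_, by simp [hs]⟩
        obtain ⟨j, hj⟩ := (mem_of_image f.2).1 v.2
        exact ⟨j, Subtype.ext hj⟩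
      invFun := fun σ => ⟨fun j => σ j, by
        ext v
        simp only [mem_image, mem_univ, true_and]
        exact ⟨fun ⟨j, hj⟩ => hj ▸ (σ j).2, fun hv => ⟨σ.symm ⟨v, hv⟩, by simp⟩⟩⟩
      left_inv := fun f => rfl
      right_inv := fun σ => by ext; rfl }
  rw [← Fintype.card_subtype, Fintype.card_congr e,
    Fintype.card_equiv (Fintype.equivOfCardEq (by simp [hs])), Fintype.card_fin]

lemma sum_prod_of_image_eq {α R : Type*} [Fintype α] [DecidableEq α] [CommSemiring R] {k : ℕ}
    {s : Finset α} (hs : #s = k) (x : α → R) :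
    ∑ f : Fin k → α with univ.image f = s, ∏ j, x (f j) = k ! * ∏ v ∈ s, x v := by
  have hterm : ∀ f ∈ ({f : Fin k → α | univ.image f = s} : Finset _),
      ∏ j, x (f j) = ∏ v ∈ s, x v := fun f hf => by
    rw [mem_filter] at hf
    have hinj : Set.InjOn f (univ : Finset (Fin k)) :=
      card_image_iff.mp (by rw [hf.2, hs, card_univ, Fintype.card_fin])
    rw [← hf.2, prod_image hinj]
  rw [sum_congr rfl hterm, sum_const, card_filter_image_eq hs, nsmul_eq_mul]

-- Each edge `e ∋ i` arises from exactly `(m - 1)!` index tuples, cancelling the weight of `adjT`.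
lemma tApp_adjT {n m : ℕ} {E : Finset (Finset (Fin n))} (hunif : ∀ e ∈ E, #e = m)
    (x : Fin n → ℂ) (i : Fin n) : tApp (adjT n m E) x i = linkSum E x i := by
  set c : ℂ := 1 / ((m - 1)! : ℂ)
  have hfiber : ∀ e ∈ ({e ∈ E | i ∈ e} : Finset _),
      ∑ f ∈ ({f : Fin (m - 1) → Fin n | insert i (univ.image f) ∈ E} : Finset _)
          with insert i (univ.image f) = e,
        c * ∏ j, x (f j) = ∏ v ∈ e.erase i, x v := fun e he => by
    obtain ⟨heE, hie⟩ := mem_filter.mp he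
    have hcard : #(e.erase i) = m - 1 := by rw [card_erase_of_mem hie, hunif e heE]
    have hset : ({f ∈ ({f : Fin (m - 1) → Fin n | insert i (univ.image f) ∈ E} : Finset _) |
          insert i (univ.image f) = e} : Finset _)
        = ({f | univ.image f = e.erase i} : Finset _) := by
      rw [filter_filter]
      refine filter_congr fun f _ => ?_
      have hf : #(univ.image f) ≤ #e - 1 := by
        simpa [hunif e heE] using card_image_le (s := univ) (f := f)
      rw [insert_eq_iff_eq_erase hie hf]
      exact ⟨fun h => h.2, fun h => ⟨h ▸ (insert_erase hie).symm ▸ heE, h⟩⟩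
    rw [← mul_sum, hset, sum_prod_of_image_eq hcard, ← mul_assoc,
      one_div_mul_cancel (by exact_mod_cast (m - 1).factorial_ne_zero), one_mul]
  unfold tApp adjT
  calc ∑ f : Fin (m - 1) → Fin n,
        (if insert i (univ.image f) ∈ E then 1 / ((m - 1)! : ℂ) else 0) * ∏ j, x (f j)
      = ∑ f : Fin (m - 1) → Fin n with insert i (univ.image f) ∈ E, c * ∏ j, x (f j) := by
        rw [sum_filter]
        exact sum_congr rfl fun f _ => by split_ifs <;> simp [c]
    _ = linkSum E x i := by
        rw [← sum_fiberwise_of_maps_to (t := {e ∈ E | i ∈ e}) fun f hf =>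
          mem_filter.mpr ⟨(mem_filter.mp hf).2, mem_insert_self _ _⟩]
        exact sum_congr rfl hfiber

section Lagrangian

variable {α : Type*} {m : ℕ} {E : Finset (Finset α)}

def edgeSum (E : Finset (Finset α)) (x : α → ℝ) : ℝ := ∑ e ∈ E, ∏ v ∈ e, x v

def powSum [Fintype α] (m : ℕ) (x : α → ℝ) : ℝ := ∑ i, x i ^ m

lemma edgeSum_nonneg {y : α → ℝ} (hy : ∀ i, 0 ≤ y i) : 0 ≤ edgeSum E y :=
  sum_nonneg fun _ _ => prod_nonneg fun v _ => hy v

lemma edgeSum_update [DecidableEq α] (E : Finset (Finset α)) (y : α → ℝ) (i : α) (t : ℝ) :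
    edgeSum E (Function.update y i t) = ∑ e ∈ E with i ∉ e, ∏ v ∈ e, y v + t * linkSum E y i := by
  rw [edgeSum, ← sum_filter_not_add_sum_filter E (i ∈ ·), linkSum, mul_sum]
  congr 1
  · refine sum_congr rfl fun e he => prod_congr rfl fun v hv => ?_
    exact Function.update_of_ne (fun (h : v = i) => (mem_filter.mp he).2 (h ▸ hv)) _ _
  · refine sum_congr rfl fun e he => ?_
    rw [← mul_prod_erase e _ (mem_filter.mp he).2, Function.update_self]
    exact congrArg _ (prod_congr rfl fun v hv => Function.update_of_ne (ne_of_mem_erase hv) _ _)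

lemma powSum_update [Fintype α] [DecidableEq α] (y : α → ℝ) (i : α) (t : ℝ) :
    powSum m (Function.update y i t) = powSum m y - y i ^ m + t ^ m := by
  simp only [powSum, Function.update_apply, ite_pow]
  rw [sum_ite, filter_eq', filter_ne', if_pos (mem_univ i), sum_singleton,
    ← add_sum_erase _ _ (mem_univ i)]
  ring

lemma edgeSum_smul (hunif : ∀ e ∈ E, #e = m) (c : ℝ) (y : α → ℝ) :
    edgeSum E (c • y) = c ^ m * edgeSum E y := by
  simp only [edgeSum, mul_sum, Pi.smul_apply, smul_eq_mul, prod_mul_distrib, prod_const]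
  exact sum_congr rfl fun e he => by rw [hunif e he]

lemma powSum_smul [Fintype α] (c : ℝ) (y : α → ℝ) : powSum m (c • y) = c ^ m * powSum m y := by
  simp only [powSum, mul_sum, Pi.smul_apply, smul_eq_mul, mul_pow]


end Lagrangian

section Maximizer

variable {α : Type*} [Fintype α] {m : ℕ} {E : Finset (Finset α)}

structure IsEdgeSumMaximizer (E : Finset (Finset α)) (m : ℕ) (y : α → ℝ) : Prop where
  nonneg : ∀ i, 0 ≤ y i
  powSum_eq_one : powSum m y = 1
  edgeSum_le : ∀ z, (∀ i, 0 ≤ z i) → edgeSum E z ≤ edgeSum E y * powSum m z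

lemma eq_zero_of_powSum_eq_zero (hm : m ≠ 0) {z : α → ℝ} (hz : ∀ i, 0 ≤ z i)
    (h : powSum m z = 0) : z = 0 := by
  funext i
  exact pow_eq_zero_iff hm |>.mp <|
    (sum_eq_zero_iff_of_nonneg fun j _ => pow_nonneg (hz j) m).mp h i (mem_univ i)

lemma exists_isEdgeSumMaximizer [Nonempty α] (hm : m ≠ 0) (hunif : ∀ e ∈ E, #e = m) :
    ∃ y, IsEdgeSumMaximizer E m y := by
  set S : Set (α → ℝ) := {y | (∀ i, 0 ≤ y i) ∧ powSum m y = 1}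
  have hS : IsCompact S := by
    refine (isCompact_Icc (a := 0) (b := 1)).of_isClosed_subset ?_ fun y hy => ⟨hy.1, fun i => ?_⟩
    · simp only [S, Set.ofPred_and, Set.ofPred_forall]
      exact (isClosed_iInter fun i => isClosed_le continuous_const
        (continuous_apply (A := fun _ : α => ℝ) i)).inter
        (isClosed_eq (by unfold powSum; fun_prop) continuous_const)
    · refine (pow_le_one_iff_of_nonneg (hy.1 i) hm).mp ?_
      rw [← hy.2]
      exact single_le_sum (fun j _ => pow_nonneg (hy.1 j) m) (mem_univ i)
  have hSne : S.Nonempty := by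
    obtain ⟨i⟩ := ‹Nonempty α›
    refine ⟨Pi.single i 1, fun j => ?_, ?_⟩
    · by_cases h : j = i <;> simp [h]
    · simp [powSum, Pi.single_apply, ite_pow, zero_pow hm]
  obtain ⟨y, ⟨hy0, hy1⟩, hmax⟩ :=
    hS.exists_isMaxOn hSne (by unfold edgeSum; fun_prop : Continuous (edgeSum E)).continuousOn
  refine ⟨y, hy0, hy1, fun z hz => ?_⟩
  have hN : 0 ≤ powSum m z := sum_nonneg fun i _ => pow_nonneg (hz i) m
  rcases hN.eq_or_lt with h0 | hpos
  · obtain rfl := eq_zero_of_powSum_eq_zero hm hz h0.symm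
    have h := edgeSum_smul hunif 0 (0 : α → ℝ)
    rw [smul_zero, zero_pow hm, zero_mul] at h
    rw [h, ← h0, mul_zero]
  · set c : ℝ := (powSum m z)⁻¹ ^ ((m : ℝ)⁻¹)
    have hc : c ^ m = (powSum m z)⁻¹ := Real.rpow_inv_natCast_pow (inv_nonneg.mpr hN) hm
    have hcz : c • z ∈ S := ⟨fun i => mul_nonneg (by positivity) (hz i),
      by rw [powSum_smul, hc, inv_mul_cancel₀ hpos.ne']⟩
    have := hmax hcz
    rw [Set.mem_ofPred_eq, edgeSum_smul hunif, hc, inv_mul_le_iff₀ hpos] at this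
    linarith

end Maximizer

section

variable {α : Type*} [Fintype α] [DecidableEq α] {m : ℕ} {E : Finset (Finset α)} {y : α → ℝ}

lemma IsEdgeSumMaximizer.linkSum_eq (hy : IsEdgeSumMaximizer E m y) {i : α} (hi : 0 < y i) :
    linkSum E y i = m * edgeSum E y * y i ^ (m - 1) := by
  set W₀ := ∑ e ∈ E with i ∉ e, ∏ v ∈ e, y v
  set f : ℝ → ℝ := fun s => W₀ + s * linkSum E y i - edgeSum E y * (1 - y i ^ m + s ^ m)
  have hf : ∀ s, f s = edgeSum E (Function.update y i s)
      - edgeSum E y * powSum m (Function.update y i s) := fun s => by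
    rw [edgeSum_update, powSum_update, hy.powSum_eq_one]
  have hmax : IsLocalMax f (y i) := by
    filter_upwards [Ioi_mem_nhds hi] with s hs
    have hzero : f (y i) = 0 := by
      rw [hf, Function.update_eq_self, hy.powSum_eq_one, mul_one, sub_self]
    have hs0 : ∀ v, 0 ≤ Function.update y i s v := fun v => by
      rcases eq_or_ne v i with rfl | h
      · simpa using hs.le
      · simpa [h] using hy.nonneg v
    rw [hzero, hf, sub_nonpos]
    exact hy.edgeSum_le _ hs0
  have hderiv : HasDerivAt f (linkSum E y i - edgeSum E y * (m * y i ^ (m - 1))) (y i) := by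
    have h₁ : HasDerivAt (fun s => W₀ + s * linkSum E y i) (linkSum E y i) (y i) := by
      simpa using ((hasDerivAt_id (y i)).mul_const (linkSum E y i)).const_add W₀
    exact h₁.sub (((hasDerivAt_pow m (y i)).const_add (1 - y i ^ m)).const_mul (edgeSum E y))
  linear_combination hmax.hasDerivAt_eq_zero hderiv

/- Compare `y` with `max y t`: the edge `e` alone raises `edgeSum` by at least `y a * t ^ (m - 1)`,
while `powSum` grows by at most `card α * t ^ m`. -/
lemma IsEdgeSumMaximizer.mul_pow_le (hy : IsEdgeSumMaximizer E m y)
    (hunif : ∀ e ∈ E, #e = m) {e : Finset α} (he : e ∈ E) {a b : α} (ha : a ∈ e) (hb : b ∈ e)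
    (hyb : y b = 0) {t : ℝ} (ht : 0 < t) :
    y a * t ^ (m - 1) ≤ edgeSum E y * Fintype.card α * t ^ m := by
  set z : α → ℝ := fun v => max (y v) t
  have hz : ∀ v, 0 ≤ z v := fun v => (hy.nonneg v).trans (le_max_left _ _)
  have hlow : edgeSum E y + y a * t ^ (m - 1) ≤ edgeSum E z := by
    rw [edgeSum, edgeSum, ← add_sum_erase E _ he, ← add_sum_erase E _ he, prod_eq_zero hb hyb,
      zero_add, add_comm, ← mul_prod_erase e z ha]
    refine add_le_add (mul_le_mul (le_max_left _ _) ?_ (by positivity) (hz a))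
      (sum_le_sum fun f _ => prod_le_prod (fun v _ => hy.nonneg v) fun v _ => le_max_left _ _)
    calc t ^ (m - 1) = ∏ _v ∈ e.erase a, t := by
          rw [prod_const, card_erase_of_mem ha, hunif e he]
      _ ≤ ∏ v ∈ e.erase a, z v := prod_le_prod (fun _ _ => ht.le) fun v _ => le_max_right _ _
  have hup : powSum m z ≤ 1 + Fintype.card α * t ^ m := by
    rw [← hy.powSum_eq_one, powSum, powSum, ← card_univ, ← nsmul_eq_mul, ← sum_const,
      ← sum_add_distrib]
    refine sum_le_sum fun v _ => ?_
    rcases le_total (y v) t with h | h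
    · simpa [z, max_eq_right h] using pow_nonneg (hy.nonneg v) m
    · simpa [z, max_eq_left h] using pow_nonneg ht.le m
  nlinarith [hy.edgeSum_le z hz,
    mul_le_mul_of_nonneg_left hup (edgeSum_nonneg (E := E) hy.nonneg)]

lemma IsEdgeSumMaximizer.eq_zero_of_mem_edge (hy : IsEdgeSumMaximizer E m y)
    (hunif : ∀ e ∈ E, #e = m) {e : Finset α} (he : e ∈ E) {a b : α} (ha : a ∈ e) (hb : b ∈ e)
    (hyb : y b = 0) : y a = 0 := by
  by_contra hya
  replace hya : 0 < y a := (hy.nonneg a).lt_of_ne' hya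
  have hm : m ≠ 0 := hunif e he ▸ (card_pos.mpr ⟨a, ha⟩).ne'
  set C := edgeSum E y * Fintype.card α
  have hC : 0 ≤ C := mul_nonneg (edgeSum_nonneg hy.nonneg) (Nat.cast_nonneg _)
  set t := y a / (2 * (C + 1))
  have ht : 0 < t := by positivity
  have hya_le : y a ≤ C * t := by
    refine le_of_mul_le_mul_right ?_ (pow_pos ht (m - 1))
    calc y a * t ^ (m - 1) ≤ C * t ^ m := hy.mul_pow_le hunif he ha hb hyb ht
      _ = C * t * t ^ (m - 1) := by rw [← pow_sub_one_mul hm]; ring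
  have : C * t < y a := by
    rw [mul_div_assoc', div_lt_iff₀ (by positivity)]
    nlinarith
  linarith

end

section Connected

variable {n m : ℕ} {E : Finset (Finset (Fin n))}

lemma forall_of_closed_along_edges (hconn : ∀ u w : Fin n, HConn E u w) {p : Fin n → Prop}
    (hp : ∀ e ∈ E, ∀ a ∈ e, ∀ b ∈ e, p a → p b) {u : Fin n} (hu : p u) (w : Fin n) : p w := by
  induction hconn u w with
  | refl => exact hu
  | tail _ hstep ih =>
    obtain ⟨e, he, ha, hb⟩ := hstep
    exact hp e he _ ha _ hb ih

lemma IsEdgeSumMaximizer.pos {y : Fin n → ℝ} (hy : IsEdgeSumMaximizer E m y) (hm : m ≠ 0)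
    (hunif : ∀ e ∈ E, #e = m) (hconn : ∀ u w : Fin n, HConn E u w) (i : Fin n) : 0 < y i := by
  obtain ⟨u, hu⟩ : ∃ u, y u ≠ 0 := by
    by_contra! h
    simpa [powSum, h, zero_pow hm] using hy.powSum_eq_one
  refine forall_of_closed_along_edges (p := fun v => 0 < y v) hconn
    (fun e he a ha b hb hya => ?_) ((hy.nonneg u).lt_of_ne' hu) i
  exact (hy.nonneg b).lt_of_ne' fun hyb => hya.ne' (hy.eq_zero_of_mem_edge hunif he ha hb hyb)

theorem exists_perron_vector (hm : m ≠ 0) (hunif : ∀ e ∈ E, #e = m) (hE : E.Nonempty)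
    (hconn : ∀ u w : Fin n, HConn E u w) :
    ∃ (y : Fin n → ℝ) (r : ℝ), 0 < r ∧ (∀ i, 0 < y i) ∧ ∀ i, linkSum E y i = r * y i ^ (m - 1) := by
  have : Nonempty (Fin n) := by
    obtain ⟨e, he⟩ := hE
    obtain ⟨v, -⟩ := card_pos.mp ((hunif e he).symm ▸ Nat.pos_of_ne_zero hm)
    exact ⟨v⟩
  obtain ⟨y, hy⟩ := exists_isEdgeSumMaximizer hm hunif
  have hpos := hy.pos hm hunif hconn
  refine ⟨y, m * edgeSum E y, ?_, hpos, fun i => hy.linkSum_eq (hpos i)⟩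
  have : 0 < edgeSum E y := sum_pos (fun e _ => prod_pos fun v _ => hpos v) hE
  positivity

end Connected

lemma eq_of_prod_eq_prod_of_le {ι : Type*} {s : Finset ι} {f g : ι → ℝ} (hf : ∀ i ∈ s, 0 ≤ f i)
    (hfg : ∀ i ∈ s, f i ≤ g i) (hg : ∀ i ∈ s, 0 < g i) (h : ∏ i ∈ s, f i = ∏ i ∈ s, g i) :
    ∀ i ∈ s, f i = g i := by
  have hf' : ∀ i ∈ s, 0 < f i := fun i hi =>
    (hf i hi).lt_of_ne' fun h0 => (prod_pos hg).ne' (h ▸ prod_eq_zero hi h0)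
  by_contra! hne
  obtain ⟨i, hi, hne⟩ := hne
  exact (prod_lt_prod hf' hfg ⟨i, hi, (hfg i hi).lt_of_ne hne⟩).ne h

lemma exists_ratio_max {α : Type*} [Finite α] {y u : α → ℝ} (hy : ∀ i, 0 < y i)
    (hu : ∀ i, 0 ≤ u i) (hu0 : u ≠ 0) : ∃ s > 0, ∃ i, u i = s * y i ∧ ∀ k, u k ≤ s * y k := by
  obtain ⟨j, hj⟩ := Function.ne_iff.mp hu0
  have : Nonempty α := ⟨j⟩
  obtain ⟨i, hi⟩ := Finite.exists_max fun k => u k / y k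
  refine ⟨u i / y i, (div_pos ((hu j).lt_of_ne' hj) (hy j)).trans_le (hi j), i,
    (div_mul_cancel₀ _ (hy i).ne').symm, fun k => ?_⟩
  exact (div_le_iff₀ (hy k)).mp (hi k)

section PerronVector

variable {n m : ℕ} {E : Finset (Finset (Fin n))} {y : Fin n → ℝ} {r : ℝ}

lemma le_of_forall_mul_pow_le_linkSum (hunif : ∀ e ∈ E, #e = m) (hy : ∀ i, 0 < y i)
    (hyr : ∀ i, linkSum E y i = r * y i ^ (m - 1)) {u : Fin n → ℝ} (hu : ∀ i, 0 ≤ u i)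
    (hu0 : u ≠ 0) {c : ℝ} (hc : ∀ i, c * u i ^ (m - 1) ≤ linkSum E u i) : c ≤ r := by
  obtain ⟨s, hs, i, hi, hle⟩ := exists_ratio_max hy hu hu0
  refine le_of_mul_le_mul_right ?_ (pow_pos (hi ▸ mul_pos hs (hy i)) (m - 1))
  calc c * u i ^ (m - 1) ≤ linkSum E u i := hc i
    _ ≤ linkSum E (s • y) i := linkSum_mono hu hle i
    _ = r * u i ^ (m - 1) := by rw [linkSum_smul hunif, hyr, hi, mul_pow]; ring

lemma eq_smul_of_forall_mul_pow_le_linkSum (hunif : ∀ e ∈ E, #e = m)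
    (hconn : ∀ u w : Fin n, HConn E u w) (hy : ∀ i, 0 < y i)
    (hyr : ∀ i, linkSum E y i = r * y i ^ (m - 1)) {u : Fin n → ℝ} (hu : ∀ i, 0 ≤ u i)
    (hu0 : u ≠ 0) (hc : ∀ i, r * u i ^ (m - 1) ≤ linkSum E u i) : ∃ s : ℝ, 0 < s ∧ u = s • y := by
  obtain ⟨s, hs, i, hi, hle⟩ := exists_ratio_max hy hu hu0
  refine ⟨s, hs, funext <| forall_of_closed_along_edges (p := fun v => u v = s * y v) hconn
    (fun e he a ha b hb hua => ?_) hi⟩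
  obtain rfl | hba := eq_or_ne b a
  · exact hua
  have hsum : linkSum E u a = linkSum E (s • y) a := by
    refine le_antisymm (linkSum_mono hu hle a) ?_
    rw [linkSum_smul hunif, hyr, ← mul_assoc, mul_comm _ r, mul_assoc, ← mul_pow, ← hua]
    exact hc a
  have hterm := (sum_eq_sum_iff_of_le fun f _ => prod_le_prod (fun k _ => hu k)
    fun k _ => hle k).mp hsum e (mem_filter.mpr ⟨he, ha⟩)
  exact eq_of_prod_eq_prod_of_le (fun k _ => hu k) (fun k _ => hle k)
    (fun k _ => mul_pos hs (hy k)) hterm b (mem_erase.mpr ⟨hba, hb⟩)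

end PerronVector

lemma eq_of_sum_mul_eq_sum_mul {ι : Type*} {s : Finset ι} {w : ι → ℝ} {a : ι → ℂ} {b : ℂ}
    (hw : ∀ i ∈ s, 0 < w i) (ha : ∀ i ∈ s, ‖a i‖ ≤ 1) (hb : ‖b‖ = 1)
    (h : ∑ i ∈ s, (w i : ℂ) * a i = (∑ i ∈ s, w i : ℝ) * b) : ∀ i ∈ s, a i = b := by
  set c : ι → ℂ := fun i => starRingEnd ℂ b * a i
  have hc : ∀ i ∈ s, ‖c i‖ ≤ 1 := fun i hi => by simpa [c, hb] using ha i hi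
  have hsum : ∑ i ∈ s, (w i : ℂ) * c i = (∑ i ∈ s, w i : ℝ) := by
    simp only [c, mul_left_comm _ (starRingEnd ℂ b), ← mul_sum, h]
    rw [mul_left_comm, Complex.conj_mul', hb, Complex.ofReal_one, one_pow, mul_one]
  have hre : ∑ i ∈ s, w i * (1 - (c i).re) = 0 := by
    have := congrArg Complex.re hsum
    simp only [Complex.re_sum, Complex.re_ofReal_mul, Complex.ofReal_re] at this
    simp [mul_sub, sum_sub_distrib, this]
  intro i hi
  have hci : (c i).re = 1 := by
    have := (sum_eq_zero_iff_of_nonneg fun j hj => mul_nonneg (hw j hj).le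
      (sub_nonneg.mpr ((c j).re_le_norm.trans (hc j hj)))).mp hre i hi
    linarith [(mul_eq_zero.mp this).resolve_left (hw i hi).ne']
  have hc1 : c i = 1 := by
    have hnorm : (c i).re = ‖c i‖ := le_antisymm (c i).re_le_norm (hci ▸ hc i hi)
    obtain ⟨-, him⟩ := Complex.nonneg_iff.mp (Complex.re_eq_norm.mp hnorm)
    exact Complex.ext hci him.symm
  calc a i = (b * starRingEnd ℂ b) * a i := by rw [Complex.mul_conj', hb]; simp
    _ = b := by rw [mul_assoc, show starRingEnd ℂ b * a i = 1 from hc1, mul_one]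

section Phase

variable {α : Type*} [DecidableEq α] {m : ℕ} {E : Finset (Finset α)} {μ ν : ℂ} {d : α → ℂ}

/-- Edge form of `ν • D^{-(m-1)} A D = μ • A` for `A = adjT n m E` and `D = diag d`
(cf. `diagConj`). -/
def IsPhase (E : Finset (Finset α)) (m : ℕ) (μ ν : ℂ) (d : α → ℂ) : Prop :=
  ∀ e ∈ E, ∀ i ∈ e, μ * d i ^ (m - 1) = ν * ∏ v ∈ e.erase i, d v

lemma IsPhase.mul_linkSum_mul (hd : IsPhase E m μ ν d) (x : α → ℂ) (i : α) :
    ν * linkSum E (d * x) i = μ * d i ^ (m - 1) * linkSum E x i := by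
  simp only [linkSum, mul_sum, Pi.mul_apply, prod_mul_distrib, ← mul_assoc]
  refine sum_congr rfl fun e he => ?_
  rw [hd e (mem_filter.mp he).1 i (mem_filter.mp he).2]

lemma IsPhase.linkSum_mul_eq (hν : ν ≠ 0) (hd : IsPhase E m μ ν d) {x : α → ℂ}
    (hx : ∀ i, linkSum E x i = ν * x i ^ (m - 1)) (i : α) :
    linkSum E (d * x) i = μ * (d * x) i ^ (m - 1) := by
  refine mul_left_cancel₀ hν ?_
  rw [hd.mul_linkSum_mul, hx, Pi.mul_apply, mul_pow]
  ring

lemma IsPhase.inv (hd0 : ∀ i, d i ≠ 0) (hd : IsPhase E m μ ν d) :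
    IsPhase E m ν μ d⁻¹ := fun e he i hi => by
  have h := hd e he i hi
  have hP : ∏ v ∈ e.erase i, d v ≠ 0 := prod_ne_zero_iff.mpr fun v _ => hd0 v
  simp only [Pi.inv_apply, prod_inv_distrib, inv_pow, ← div_eq_mul_inv]
  rw [div_eq_div_iff (pow_ne_zero _ (hd0 i)) hP]
  linear_combination -h

lemma IsPhase.pow_eq_pow {n : ℕ} {E : Finset (Finset (Fin n))} {d : Fin n → ℂ}
    (hconn : ∀ u w : Fin n, HConn E u w) (hm : m ≠ 0) (hμ : μ ≠ 0) (hd : IsPhase E m μ ν d)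
    (i j : Fin n) : d i ^ m = d j ^ m := by
  have hedge : ∀ e ∈ E, ∀ a ∈ e, μ * d a ^ m = ν * ∏ v ∈ e, d v := fun e he a ha => by
    rw [← mul_prod_erase e d ha, mul_left_comm, ← hd e he a ha, ← pow_sub_one_mul hm]
    ring
  refine forall_of_closed_along_edges (p := fun v => d v ^ m = d j ^ m) hconn
    (fun e he a ha b hb hab => ?_) rfl i
  exact (mul_left_cancel₀ hμ ((hedge e he b hb).trans (hedge e he a ha).symm)).trans hab

end Phase

section Spectrum

variable {n m : ℕ} {E : Finset (Finset (Fin n))} {y : Fin n → ℝ} {r : ℝ}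

lemma mul_norm_pow_le_linkSum {μ : ℂ} {x : Fin n → ℂ}
    (hx : ∀ i, linkSum E x i = μ * x i ^ (m - 1)) (i : Fin n) :
    ‖μ‖ * ‖x i‖ ^ (m - 1) ≤ linkSum E (fun v => ‖x v‖) i := by
  rw [← norm_pow, ← norm_mul, ← hx]
  exact norm_linkSum_le E x i

lemma isPhase_of_linkSum_eq (hr : 0 < r) (hy : ∀ i, 0 < y i)
    (hyr : ∀ i, linkSum E y i = r * y i ^ (m - 1)) {μ : ℂ} (hμ : ‖μ‖ = r) {d : Fin n → ℂ}
    (hd : ∀ i, ‖d i‖ = 1)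
    (heig : ∀ i, linkSum E (fun v => d v * y v) i = μ * (d i * y i) ^ (m - 1)) :
    IsPhase E m μ r d := by
  intro e he i hi
  have hrC : (r : ℂ) ≠ 0 := Complex.ofReal_ne_zero.mpr hr.ne'
  have key := eq_of_sum_mul_eq_sum_mul (s := {e ∈ E | i ∈ e})
    (w := fun e => ∏ v ∈ e.erase i, y v) (a := fun e => ∏ v ∈ e.erase i, d v)
    (b := μ * d i ^ (m - 1) / r) (fun e _ => prod_pos fun v _ => hy v)
    (fun e _ => by simp [norm_prod, hd]) (by simp [hd, hμ, abs_of_pos hr, hr.ne']) ?_ e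
    (mem_filter.mpr ⟨he, hi⟩)
  · rw [key, mul_div_cancel₀ _ hrC]
  · have hw : ∑ e ∈ E with i ∈ e, ∏ v ∈ e.erase i, y v = r * y i ^ (m - 1) := hyr i
    have := heig i
    simp only [linkSum, prod_mul_distrib] at this
    simp only [hw, Complex.ofReal_prod, mul_comm (∏ v ∈ _, ((y v : ℝ) : ℂ)), this]
    push_cast
    field_simp
    ring

lemma exists_phase_of_isEigPair (hunif : ∀ e ∈ E, #e = m) (hconn : ∀ u w : Fin n, HConn E u w)
    (hr : 0 < r) (hy : ∀ i, 0 < y i) (hyr : ∀ i, linkSum E y i = r * y i ^ (m - 1)) {μ : ℂ}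
    (hμ : ‖μ‖ = r) {x : Fin n → ℂ} (hx : IsEigPair (adjT n m E) μ x) :
    ∃ (s : ℝ) (d : Fin n → ℂ), 0 < s ∧ (∀ i, ‖d i‖ = 1) ∧ IsPhase E m μ r d ∧
      x = (s : ℂ) • fun i => d i * y i := by
  obtain ⟨hx0, hx⟩ := hx
  simp only [tApp_adjT hunif] at hx
  obtain ⟨s, hs, hus⟩ := eq_smul_of_forall_mul_pow_le_linkSum hunif hconn hy hyr
    (u := fun v => ‖x v‖) (fun _ => norm_nonneg _)
    (fun h => hx0 (funext fun v => norm_eq_zero.mp (congrFun h v)))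
    (fun i => hμ ▸ mul_norm_pow_le_linkSum hx i)
  have hsy : ∀ i, (s : ℂ) * y i ≠ 0 := fun i =>
    mul_ne_zero (Complex.ofReal_ne_zero.mpr hs.ne') (Complex.ofReal_ne_zero.mpr (hy i).ne')
  set d : Fin n → ℂ := fun i => x i / (s * y i)
  have hxd : x = (s : ℂ) • fun i => d i * y i := funext fun i => by
    simp only [Pi.smul_apply, smul_eq_mul, d]
    rw [div_mul_eq_mul_div, mul_div_assoc', mul_left_comm, mul_div_cancel_right₀ _ (hsy i)]
  have hd : ∀ i, ‖d i‖ = 1 := fun i => by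
    have hn : ‖x i‖ = s * y i := congrFun hus i
    rw [norm_div, hn, norm_mul, Complex.norm_real, Complex.norm_real, Real.norm_of_nonneg hs.le,
      Real.norm_of_nonneg (hy i).le, div_self (mul_pos hs (hy i)).ne']
  refine ⟨s, d, hs, hd, isPhase_of_linkSum_eq hr hy hyr hμ hd fun i => ?_, hxd⟩
  have h := hx i
  rw [hxd, linkSum_smul hunif, Pi.smul_apply, smul_eq_mul, mul_pow, mul_left_comm] at h
  exact mul_left_cancel₀ (pow_ne_zero _ (Complex.ofReal_ne_zero.mpr hs.ne')) h

lemma specRad_adjT_eq [Nonempty (Fin n)] (hunif : ∀ e ∈ E, #e = m) (hr : 0 < r)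
    (hy : ∀ i, 0 < y i) (hyr : ∀ i, linkSum E y i = r * y i ^ (m - 1)) :
    specRad (adjT n m E) = r := by
  have hbound : ∀ l ∈ Eigenvalues (adjT n m E), ‖l‖ ≤ r := fun l ⟨x, hx0, hx⟩ =>
    le_of_forall_mul_pow_le_linkSum hunif hy hyr (u := fun v => ‖x v‖) (fun _ => norm_nonneg _)
      (fun h => hx0 (funext fun v => norm_eq_zero.mp (congrFun h v)))
      (mul_norm_pow_le_linkSum fun i => (tApp_adjT hunif x i).symm.trans (hx i))
  have hmem : (r : ℂ) ∈ Eigenvalues (adjT n m E) := by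
    refine ⟨fun v => y v, fun h => ?_, fun i => ?_⟩
    · obtain ⟨i⟩ := ‹Nonempty (Fin n)›
      exact (hy i).ne' (Complex.ofReal_eq_zero.mp (congrFun h i))
    · have h := map_linkSum Complex.ofRealHom E y i
      simp only [Complex.ofRealHom_eq_coe] at h
      rw [tApp_adjT hunif, ← h, hyr]
      push_cast
      rfl
  have hbdd : BddAbove ((fun z : ℂ => ‖z‖) '' Eigenvalues (adjT n m E)) :=
    ⟨r, by rintro _ ⟨l, hl, rfl⟩; exact hbound l hl⟩
  refine le_antisymm (csSup_le ⟨_, Set.mem_image_of_mem _ hmem⟩ ?_) (le_csSup hbdd ⟨_, hmem, ?_⟩)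
  · rintro _ ⟨l, hl, rfl⟩
    exact hbound l hl
  · simp [hr.le]

end Spectrum

section ProjectiveEigenvariety

variable {n m : ℕ} {E : Finset (Finset (Fin n))}

lemma PV_adjT_finite (hunif : ∀ e ∈ E, #e = m) (hconn : ∀ u w : Fin n, HConn E u w)
    (hm : m ≠ 0) {y : Fin n → ℝ} {r : ℝ} (hr : 0 < r) (hy : ∀ i, 0 < y i)
    (hyr : ∀ i, linkSum E y i = r * y i ^ (m - 1)) {μ : ℂ} (hμ : ‖μ‖ = r) :
    (PV (adjT n m E) μ).Finite := by
  have hroots : {d : Fin n → ℂ | ∀ i, d i ∈ {z : ℂ | z ^ m = 1}}.Finite :=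
    Set.Finite.pi' fun _ => (Polynomial.nthRoots m (1 : ℂ)).toFinset.finite_toSet.subset
      fun z hz => by simpa [Polynomial.mem_nthRoots (Nat.pos_of_ne_zero hm)] using hz
  refine (hroots.biUnion (t := fun d => {p | ∃ h, Projectivization.mk ℂ (fun i => d i * y i) h = p})
    fun d _ => Set.Subsingleton.finite ?_).subset ?_
  · rintro _ ⟨h, rfl⟩ _ ⟨h', rfl⟩
    rfl
  rintro _ ⟨x, hx0, rfl, hx⟩
  obtain ⟨s, d, hs, hd1, hd, rfl⟩ := exists_phase_of_isEigPair hunif hconn hr hy hyr hμ ⟨hx0, hx⟩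
  obtain ⟨j, -⟩ := Function.ne_iff.mp hx0
  have hdj : d j ≠ 0 := norm_ne_zero_iff.mp (by rw [hd1]; exact one_ne_zero)
  have hμ0 : μ ≠ 0 := norm_ne_zero_iff.mp (hμ ▸ hr.ne')
  refine Set.mem_biUnion (x := fun i => d i / d j) (fun i => ?_) ⟨?_, ?_⟩
  · rw [Set.mem_ofPred_eq, div_pow, hd.pow_eq_pow hconn hm hμ0 i j, div_self (pow_ne_zero m hdj)]
  · refine Function.ne_iff.mpr ⟨j, ?_⟩
    simpa [hdj] using (hy j).ne'
  · rw [Projectivization.mk_eq_mk_iff']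
    refine ⟨(s * d j)⁻¹, funext fun i => ?_⟩
    have hs0 : (s : ℂ) ≠ 0 := Complex.ofReal_ne_zero.mpr hs.ne'
    simp only [Pi.smul_apply, smul_eq_mul]
    field_simp

lemma mulLeft_injective {d : Fin n → ℂ} (hd0 : ∀ i, d i ≠ 0) :
    Function.Injective (LinearMap.mulLeft ℂ d) :=
  (Pi.isUnit_iff.mpr fun i => (hd0 i).isUnit).mul_right_injective

lemma PV_adjT_eq_image_map (hunif : ∀ e ∈ E, #e = m) {μ ν : ℂ} (hμ : μ ≠ 0) (hν : ν ≠ 0)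
    {d : Fin n → ℂ} (hd0 : ∀ i, d i ≠ 0) (hd : IsPhase E m μ ν d) :
    PV (adjT n m E) μ = Projectivization.map (LinearMap.mulLeft ℂ d)
      (mulLeft_injective hd0) '' PV (adjT n m E) ν := by
  simp only [PV, tApp_adjT hunif]
  refine Set.ext fun p => ⟨?_, ?_⟩
  · rintro ⟨z, hz0, rfl, hz⟩
    have hdz : d * (d⁻¹ * z) = z := funext fun i => mul_inv_cancel_left₀ (hd0 i) (z i)
    have hx0 : d⁻¹ * z ≠ 0 := fun h => hz0 (by rw [← hdz, h, mul_zero])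
    refine ⟨_, ⟨d⁻¹ * z, hx0, rfl, (hd.inv hd0).linkSum_mul_eq hμ hz⟩, ?_⟩
    rw [Projectivization.map_mk]
    congr 1
  · rintro ⟨_, ⟨x, hx0, rfl, hx⟩, rfl⟩
    refine ⟨d * x, ?_, (Projectivization.map_mk (LinearMap.mulLeft ℂ d) _ x hx0).symm,
      hd.linkSum_mul_eq hν hx⟩
    exact (map_ne_zero_iff _ (mulLeft_injective hd0)).mpr hx0

end ProjectiveEigenvariety

/-- For a connected `m`-uniform hypergraph `G` with at least one edge, all projective
eigenvarieties at eigenvalues of modulus `ρ` are finite with the same cardinality. -/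
theorem stmt18 {n m : ℕ} (hm : 2 ≤ m) (E : Finset (Finset (Fin n)))
    (hunif : ∀ e ∈ E, e.card = m) (hE : E.Nonempty)
    (hconn : ∀ u w : Fin n, HConn E u w) :
    ∀ l ∈ Eigenvalues (adjT n m E), ‖l‖ = specRad (adjT n m E) →
      (PV (adjT n m E) l).Finite ∧
      (PV (adjT n m E) l).ncard = (PV (adjT n m E) ((specRad (adjT n m E) : ℝ) : ℂ)).ncard := by
  rintro l ⟨x, hx⟩ hlr
  have hm0 : m ≠ 0 := by omega
  obtain ⟨y, r, hr, hy, hyr⟩ := exists_perron_vector hm0 hunif hE hconn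
  obtain ⟨j, -⟩ := Function.ne_iff.mp hx.1
  have : Nonempty (Fin n) := ⟨j⟩
  rw [specRad_adjT_eq hunif hr hy hyr] at hlr ⊢
  obtain ⟨-, d, -, hd1, hd, -⟩ := exists_phase_of_isEigPair hunif hconn hr hy hyr hlr hx
  have hl0 : l ≠ 0 := norm_ne_zero_iff.mp (hlr ▸ hr.ne')
  have hd0 : ∀ i, d i ≠ 0 := fun i => norm_ne_zero_iff.mp (by rw [hd1]; exact one_ne_zero)
  refine ⟨PV_adjT_finite hunif hconn hm0 hr hy hyr hlr, ?_⟩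
  rw [PV_adjT_eq_image_map hunif hl0 (Complex.ofReal_ne_zero.mpr hr.ne') hd0 hd]
  exact Set.ncard_image_of_injective _ (Projectivization.map_injective _ _)

end PaperTensor
end
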